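/- Under the SVRG setup, if 2L²h < μ then for every epoch j ≥ 0 the pivots satisfy E[‖x_j − x⋆‖²] ≤ ((1 + 2L²h²m) / (h m (μ − 2L²h)))^j · ‖x₀ − x⋆‖². -/

import Mathlib

/-!
Within an epoch, the index `i_{j,k}` is uniform and independent of the iterate `y_{j,k}` and the
pivot `x_j`, so the SVRG estimator averages to `∇f(y_{j,k})`. Its second moment is at most
`2L²(‖y_{j,k} - x⋆‖² + ‖x_j - x⋆‖²)`, because it is `∇f_i(y) - ∇f_i(x⋆)` minus a centred copy of
`∇f_i(x_j) - ∇f_i(x⋆)`. Expanding the square of one step and applying the restricted secant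
inequality gives `a_{k+1} ≤ (1 - h(μ - 2L²h)) a_k + 2L²h² a_0` for `a_k = E‖y_{j,k} - x⋆‖²`;
summing this over the epoch telescopes to a bound on the mean of the `a_k`, which is
`E‖x_{j+1} - x⋆‖²` by the Option II jump. Induction over epochs finishes the proof.
-/

open MeasureTheory ProbabilityTheory Finset
open scoped RealInnerProductSpace ENNReal

theorem gradient_eq_smul_sum {F ι : Type*} [NormedAddCommGroup F] [InnerProductSpace ℝ F]
    [CompleteSpace F] [Fintype ι] {fs : ι → F → ℝ} {f : F → ℝ} {c : ℝ}
    (hf : ∀ z, f z = c * ∑ i, fs i z) (hd : ∀ i, Differentiable ℝ (fs i)) (z : F) :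
    gradient f z = c • ∑ i, gradient (fs i) z := by
  refine HasGradientAt.gradient ?_
  rw [hasGradientAt_iff_hasFDerivAt, map_smul, map_sum]
  simp_rw [toDual_gradient]
  rw [show f = fun w => c * ∑ i, fs i w from funext hf]
  exact (HasFDerivAt.fun_sum fun i _ => (hd i z).hasFDerivAt).const_mul c

theorem continuous_of_norm_sub_le {E F : Type*} [SeminormedAddCommGroup E]
    [SeminormedAddCommGroup F] {φ : E → F} {L : ℝ} (hφ : ∀ u w, ‖φ u - φ w‖ ≤ L * ‖u - w‖) :
    Continuous φ :=
  (LipschitzWith.of_dist_le' fun u w => by simpa only [dist_eq_norm] using hφ u w).continuous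

theorem inv_card_mul_sum_le {ι : Type*} [Fintype ι] [Nonempty ι] {c : ι → ℝ} {B : ℝ}
    (hc : ∀ a, c a ≤ B) : (Fintype.card ι : ℝ)⁻¹ * ∑ a, c a ≤ B := by
  have hcard : (0 : ℝ) < Fintype.card ι := by exact_mod_cast Fintype.card_pos
  rw [inv_mul_le_iff₀ hcard]
  simpa [mul_comm] using Finset.sum_le_card_nsmul univ c B fun a _ => hc a

def svrgGrad {ι E : Type*} [AddCommGroup E] (g : ι → E → E) (gbar : E → E) (a : ι) (u w : E) :
    E :=
  g a u - g a w + gbar w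

section Estimator

variable {ι E : Type*} [Fintype ι] [Nonempty ι] [NormedAddCommGroup E] [InnerProductSpace ℝ E]
  {g : ι → E → E} {gbar : E → E} {L : ℝ}

theorem sum_norm_sub_average_sq_le (X : ι → E) :
    ∑ a, ‖X a - (Fintype.card ι : ℝ)⁻¹ • ∑ b, X b‖ ^ 2 ≤ ∑ a, ‖X a‖ ^ 2 := by
  set n : ℝ := (Fintype.card ι : ℝ)
  set Xbar := n⁻¹ • ∑ b, X b
  have hsum : ∑ b, X b = n • Xbar := by
    rw [smul_smul, mul_inv_cancel₀ (by positivity), one_smul]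
  have hexpand : ∑ a, ‖X a - Xbar‖ ^ 2 = ∑ a, ‖X a‖ ^ 2 - n * ‖Xbar‖ ^ 2 := by
    simp_rw [norm_sub_sq_real]
    rw [sum_add_distrib, sum_sub_distrib, ← mul_sum, ← sum_inner, hsum, real_inner_smul_left,
      real_inner_self_eq_norm_sq, sum_const, card_univ, nsmul_eq_mul]
    ring
  rw [hexpand]
  have : 0 ≤ n * ‖Xbar‖ ^ 2 := by positivity
  linarith

theorem norm_sub_le_of_average (havg : ∀ z, gbar z = (Fintype.card ι : ℝ)⁻¹ • ∑ a, g a z)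
    (hL : ∀ a u w, ‖g a u - g a w‖ ≤ L * ‖u - w‖) (u w : E) :
    ‖gbar u - gbar w‖ ≤ L * ‖u - w‖ := by
  rw [havg, havg, ← smul_sub, ← sum_sub_distrib, norm_smul, Real.norm_eq_abs,
    abs_of_nonneg (by positivity)]
  exact (mul_le_mul_of_nonneg_left (norm_sum_le _ _) (by positivity)).trans
    (inv_card_mul_sum_le fun a => hL a u w)

theorem average_svrgGrad (havg : ∀ z, gbar z = (Fintype.card ι : ℝ)⁻¹ • ∑ a, g a z) (u w : E) :
    (Fintype.card ι : ℝ)⁻¹ • ∑ a, svrgGrad g gbar a u w = gbar u := by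
  have hcard : (Fintype.card ι : ℝ) ≠ 0 := by positivity
  simp only [svrgGrad, sum_add_distrib, sum_sub_distrib, sum_const, card_univ, smul_add,
    smul_sub, ← havg, ← Nat.cast_smul_eq_nsmul ℝ, smul_smul, inv_mul_cancel₀ hcard, one_smul]
  abel

theorem continuous_svrgGrad (havg : ∀ z, gbar z = (Fintype.card ι : ℝ)⁻¹ • ∑ a, g a z)
    (hL : ∀ a u w, ‖g a u - g a w‖ ≤ L * ‖u - w‖) (a : ι) :
    Continuous fun p : E × E => svrgGrad g gbar a p.1 p.2 :=
  have hg := continuous_of_norm_sub_le (hL a)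
  ((hg.comp continuous_fst).sub (hg.comp continuous_snd)).add
    ((continuous_of_norm_sub_le (norm_sub_le_of_average havg hL)).comp continuous_snd)

theorem average_norm_svrgGrad_sq_le (havg : ∀ z, gbar z = (Fintype.card ι : ℝ)⁻¹ • ∑ a, g a z)
    (hL : ∀ a u w, ‖g a u - g a w‖ ≤ L * ‖u - w‖) {xstar : E} (hstar : gbar xstar = 0)
    (u w : E) :
    (Fintype.card ι : ℝ)⁻¹ * ∑ a, ‖svrgGrad g gbar a u w‖ ^ 2 ≤
      2 * L ^ 2 * ‖u - xstar‖ ^ 2 + 2 * L ^ 2 * ‖w - xstar‖ ^ 2 := by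
  set n : ℝ := (Fintype.card ι : ℝ)
  set X : ι → E := fun a => g a w - g a xstar
  have hmean : n⁻¹ • ∑ b, X b = gbar w := by
    simp only [X, sum_sub_distrib, smul_sub, ← havg, hstar, sub_zero]
  have hsplit : ∀ a, ‖svrgGrad g gbar a u w‖ ^ 2 ≤
      2 * ‖g a u - g a xstar‖ ^ 2 + 2 * ‖X a - n⁻¹ • ∑ b, X b‖ ^ 2 := by
    intro a
    -- a centred copy of `X`, whose spread is at most its second moment
    rw [hmean, show svrgGrad g gbar a u w = (g a u - g a xstar) - (X a - gbar w) by
      simp only [svrgGrad, X]; abel]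
    refine (pow_le_pow_left₀ (norm_nonneg _) (norm_sub_le _ _) 2).trans ?_
    linarith [add_sq_le (a := ‖g a u - g a xstar‖) (b := ‖X a - gbar w‖)]
  have hLsq : ∀ a v, ‖g a v - g a xstar‖ ^ 2 ≤ L ^ 2 * ‖v - xstar‖ ^ 2 := fun a v => by
    rw [← mul_pow]; exact pow_le_pow_left₀ (norm_nonneg _) (hL a v xstar) 2
  have hvar : n⁻¹ * ∑ a, ‖X a - n⁻¹ • ∑ b, X b‖ ^ 2 ≤ L ^ 2 * ‖w - xstar‖ ^ 2 :=
    (mul_le_mul_of_nonneg_left (sum_norm_sub_average_sq_le X) (by positivity)).trans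
      (inv_card_mul_sum_le fun a => hLsq a w)
  calc n⁻¹ * ∑ a, ‖svrgGrad g gbar a u w‖ ^ 2
      ≤ n⁻¹ * ∑ a, (2 * ‖g a u - g a xstar‖ ^ 2 + 2 * ‖X a - n⁻¹ • ∑ b, X b‖ ^ 2) :=
        mul_le_mul_of_nonneg_left (sum_le_sum fun a _ => hsplit a) (by positivity)
    _ = 2 * (n⁻¹ * ∑ a, ‖g a u - g a xstar‖ ^ 2) +
          2 * (n⁻¹ * ∑ a, ‖X a - n⁻¹ • ∑ b, X b‖ ^ 2) := by
        rw [sum_add_distrib, ← mul_sum, ← mul_sum]; ring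
    _ ≤ 2 * L ^ 2 * ‖u - xstar‖ ^ 2 + 2 * L ^ 2 * ‖w - xstar‖ ^ 2 := by
        linarith [inv_card_mul_sum_le fun a => hLsq a u]

end Estimator

theorem apply_eq_sum_ite_mul {ι : Type*} [Fintype ι] [DecidableEq ι] (c : ι → ℝ) (i : ι) :
    c i = ∑ a, (if i = a then 1 else 0) * c a := by
  simp only [ite_mul, one_mul, zero_mul, sum_ite_eq, mem_univ, if_true]

section Sampling

variable {Ω ι β : Type*} {mΩ : MeasurableSpace Ω} {P : Measure Ω} [MeasurableSpace ι]
  [MeasurableSingletonClass ι] {I : Ω → ι} {Z : Ω → β} {φ : ι → β → ℝ}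

theorem MeasureTheory.Integrable.ite_eq_mul [DecidableEq ι] (hI : Measurable I) (a : ι)
    {F : Ω → ℝ} (hF : Integrable F P) :
    Integrable (fun ω => (if I ω = a then 1 else 0) * F ω) P := by
  refine hF.bdd_mul (c := 1)
    (measurable_const.ite (hI (measurableSet_singleton a)) measurable_const).aestronglyMeasurable
    (ae_of_all _ fun ω => ?_)
  split_ifs <;> simp

theorem integrable_comp_of_fintype [Fintype ι] (hI : Measurable I)
    (hint : ∀ a, Integrable (fun ω => φ a (Z ω)) P) :
    Integrable (fun ω => φ (I ω) (Z ω)) P := by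
  classical
  rw [funext fun ω => apply_eq_sum_ite_mul (φ · (Z ω)) (I ω)]
  exact integrable_finsetSum _ fun a _ => (hint a).ite_eq_mul hI a

theorem integral_comp_of_indepFun [Fintype ι] [MeasurableSpace β] (hI : Measurable I)
    (hIZ : IndepFun I Z P) (hφ : ∀ a, Measurable (φ a))
    (hint : ∀ a, Integrable (fun ω => φ a (Z ω)) P) :
    ∫ ω, φ (I ω) (Z ω) ∂P = ∑ a, P.real (I ⁻¹' {a}) * ∫ ω, φ a (Z ω) ∂P := by
  classical
  rw [funext fun ω => apply_eq_sum_ite_mul (φ · (Z ω)) (I ω),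
    integral_finsetSum _ fun a _ => (hint a).ite_eq_mul hI a]
  refine sum_congr rfl fun a _ => ?_
  have hsel : (fun ω => if I ω = a then (1 : ℝ) else 0) = (I ⁻¹' {a}).indicator 1 := by
    ext ω; simp [Set.indicator_apply]
  have hindep : IndepFun (fun ω => if I ω = a then (1 : ℝ) else 0) (fun ω => φ a (Z ω)) P :=
    hIZ.comp (Measurable.of_discrete (f := fun i => if i = a then (1 : ℝ) else 0)) (hφ a)
  rw [hindep.integral_fun_mul_eq_mul_integral
      (hsel ▸ (measurable_one.indicator (hI (measurableSet_singleton a)))).aestronglyMeasurable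
      (hint a).aestronglyMeasurable, hsel, integral_indicator_one (hI (measurableSet_singleton a))]

theorem integral_comp_of_indepFun_uniform [Fintype ι] [MeasurableSpace β] (hI : Measurable I)
    (hunif : ∀ a, P {ω | I ω = a} = (Fintype.card ι : ℝ≥0∞)⁻¹) (hIZ : IndepFun I Z P)
    (hφ : ∀ a, Measurable (φ a)) (hint : ∀ a, Integrable (fun ω => φ a (Z ω)) P) :
    ∫ ω, φ (I ω) (Z ω) ∂P = ∫ ω, (Fintype.card ι : ℝ)⁻¹ * ∑ a, φ a (Z ω) ∂P := by
  rw [integral_comp_of_indepFun hI hIZ hφ hint, integral_const_mul,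
    integral_finsetSum _ fun a _ => hint a, mul_sum]
  refine sum_congr rfl fun a _ => ?_
  simp only [measureReal_def, Set.preimage, Set.mem_singleton_iff, hunif, ENNReal.toReal_inv,
    ENNReal.toReal_natCast]

end Sampling

section SquareIntegrable

variable {Ω E : Type*} {mΩ : MeasurableSpace Ω} {P : Measure Ω} [NormedAddCommGroup E]

theorem MeasureTheory.MemLp.comp_of_norm_sub_le {F : Type*} [NormedAddCommGroup F]
    [IsFiniteMeasure P] {p : ℝ≥0∞} {Y : Ω → E} {φ : E → F} {L : ℝ}
    (hφ : ∀ u w, ‖φ u - φ w‖ ≤ L * ‖u - w‖) (hY : MemLp Y p P) : MemLp (fun ω => φ (Y ω)) p P := by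
  have hlip : LipschitzWith L.toNNReal fun u => φ u - φ 0 := LipschitzWith.of_dist_le' fun u w => by
    simpa only [dist_eq_norm, sub_sub_sub_cancel_right] using hφ u w
  convert (hlip.comp_memLp (sub_self _) hY).add (memLp_const (φ 0)) using 1
  ext ω
  simp

theorem MeasureTheory.MemLp.integrable_norm_sq {Y : Ω → E} (hY : MemLp Y 2 P) :
    Integrable (fun ω => ‖Y ω‖ ^ 2) P :=
  hY.integrable_norm_pow (p := 2) two_ne_zero

theorem MeasureTheory.MemLp.integrable_inner [InnerProductSpace ℝ E] {X Y : Ω → E}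
    (hX : MemLp X 2 P) (hY : MemLp Y 2 P) : Integrable (fun ω => ⟪X ω, Y ω⟫) P :=
  (L2.integrable_inner (𝕜 := ℝ) (hX.toLp X) (hY.toLp Y)).congr <| by
    filter_upwards [hX.coeFn_toLp, hY.coeFn_toLp] with ω hXω hYω
    rw [hXω, hYω]

theorem memLp_svrgGrad {ι : Type*} [Fintype ι] [Nonempty ι] [InnerProductSpace ℝ E]
    [IsFiniteMeasure P] {g : ι → E → E} {gbar : E → E} {L : ℝ} {Y X : Ω → E}
    (havg : ∀ z, gbar z = (Fintype.card ι : ℝ)⁻¹ • ∑ a, g a z)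
    (hL : ∀ a u w, ‖g a u - g a w‖ ≤ L * ‖u - w‖) (hY : MemLp Y 2 P) (hX : MemLp X 2 P) (a : ι) :
    MemLp (fun ω => svrgGrad g gbar a (Y ω) (X ω)) 2 P :=
  ((hY.comp_of_norm_sub_le (hL a)).sub (hX.comp_of_norm_sub_le (hL a))).add
    (hX.comp_of_norm_sub_le (norm_sub_le_of_average havg hL))

end SquareIntegrable

section OneStep

variable {Ω ι E : Type*} {mΩ : MeasurableSpace Ω} {P : Measure Ω} [IsFiniteMeasure P]
  [Fintype ι] [Nonempty ι] [MeasurableSpace ι] [MeasurableSingletonClass ι]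
  [NormedAddCommGroup E] [InnerProductSpace ℝ E] [MeasurableSpace E] [BorelSpace E]
  [SecondCountableTopology E] {g : ι → E → E} {gbar : E → E} {L : ℝ} {xstar : E}
  {I : Ω → ι} {Y X : Ω → E}

theorem integral_inner_svrgGrad_eq (havg : ∀ z, gbar z = (Fintype.card ι : ℝ)⁻¹ • ∑ a, g a z)
    (hL : ∀ a u w, ‖g a u - g a w‖ ≤ L * ‖u - w‖) (hI : Measurable I)
    (hunif : ∀ a, P {ω | I ω = a} = (Fintype.card ι : ℝ≥0∞)⁻¹)
    (hIYX : IndepFun I (fun ω => (Y ω, X ω)) P) (hY : MemLp Y 2 P) (hX : MemLp X 2 P) :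
    ∫ ω, ⟪svrgGrad g gbar (I ω) (Y ω) (X ω), Y ω - xstar⟫ ∂P =
      ∫ ω, ⟪gbar (Y ω), Y ω - xstar⟫ ∂P := by
  rw [integral_comp_of_indepFun_uniform (φ := fun a p => ⟪svrgGrad g gbar a p.1 p.2, p.1 - xstar⟫)
    hI hunif hIYX
    (fun a => ((continuous_svrgGrad havg hL a).inner
      (continuous_fst.sub continuous_const)).measurable)
    (fun a => (memLp_svrgGrad havg hL hY hX a).integrable_inner (hY.sub (memLp_const xstar)))]
  congr with ω
  rw [← sum_inner, ← real_inner_smul_left, average_svrgGrad havg]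

theorem integral_norm_svrgGrad_sq_le (havg : ∀ z, gbar z = (Fintype.card ι : ℝ)⁻¹ • ∑ a, g a z)
    (hL : ∀ a u w, ‖g a u - g a w‖ ≤ L * ‖u - w‖) (hstar : gbar xstar = 0) (hI : Measurable I)
    (hunif : ∀ a, P {ω | I ω = a} = (Fintype.card ι : ℝ≥0∞)⁻¹)
    (hIYX : IndepFun I (fun ω => (Y ω, X ω)) P) (hY : MemLp Y 2 P) (hX : MemLp X 2 P) :
    ∫ ω, ‖svrgGrad g gbar (I ω) (Y ω) (X ω)‖ ^ 2 ∂P ≤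
      2 * L ^ 2 * ∫ ω, ‖Y ω - xstar‖ ^ 2 ∂P + 2 * L ^ 2 * ∫ ω, ‖X ω - xstar‖ ^ 2 ∂P := by
  have hint : ∀ a, Integrable (fun ω => ‖svrgGrad g gbar a (Y ω) (X ω)‖ ^ 2) P := fun a =>
    (memLp_svrgGrad havg hL hY hX a).integrable_norm_sq
  have hYint : Integrable (fun ω => 2 * L ^ 2 * ‖Y ω - xstar‖ ^ 2) P :=
    ((hY.sub (memLp_const xstar)).integrable_norm_sq).const_mul _
  have hXint : Integrable (fun ω => 2 * L ^ 2 * ‖X ω - xstar‖ ^ 2) P :=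
    ((hX.sub (memLp_const xstar)).integrable_norm_sq).const_mul _
  rw [integral_comp_of_indepFun_uniform (φ := fun a p => ‖svrgGrad g gbar a p.1 p.2‖ ^ 2)
    hI hunif hIYX (fun a => ((continuous_svrgGrad havg hL a).norm.pow 2).measurable) hint,
    ← integral_const_mul, ← integral_const_mul, ← integral_add hYint hXint]
  exact integral_mono ((integrable_finsetSum _ fun a _ => hint a).const_mul _)
    (hYint.add hXint) fun ω => average_norm_svrgGrad_sq_le havg hL hstar (Y ω) (X ω)

theorem integral_norm_svrgStep_sub_sq_le {μ h : ℝ}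
    (havg : ∀ z, gbar z = (Fintype.card ι : ℝ)⁻¹ • ∑ a, g a z)
    (hL : ∀ a u w, ‖g a u - g a w‖ ≤ L * ‖u - w‖) (hstar : gbar xstar = 0)
    (hrsi : ∀ z, μ / 2 * ‖z - xstar‖ ^ 2 ≤ ⟪gbar z, z - xstar⟫) (hh : 0 ≤ h) (hI : Measurable I)
    (hunif : ∀ a, P {ω | I ω = a} = (Fintype.card ι : ℝ≥0∞)⁻¹)
    (hIYX : IndepFun I (fun ω => (Y ω, X ω)) P) (hY : MemLp Y 2 P) (hX : MemLp X 2 P) :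
    ∫ ω, ‖Y ω - h • svrgGrad g gbar (I ω) (Y ω) (X ω) - xstar‖ ^ 2 ∂P ≤
      (1 - h * (μ - 2 * L ^ 2 * h)) * ∫ ω, ‖Y ω - xstar‖ ^ 2 ∂P +
        2 * L ^ 2 * h ^ 2 * ∫ ω, ‖X ω - xstar‖ ^ 2 ∂P := by
  set V := fun ω => svrgGrad g gbar (I ω) (Y ω) (X ω)
  have hexpand : ∀ ω, ‖Y ω - h • V ω - xstar‖ ^ 2 =
      ‖Y ω - xstar‖ ^ 2 - 2 * h * ⟪V ω, Y ω - xstar⟫ + h ^ 2 * ‖V ω‖ ^ 2 := fun ω => by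
    rw [sub_right_comm, norm_sub_sq_real, real_inner_smul_right, norm_smul, mul_pow,
      Real.norm_eq_abs, sq_abs, real_inner_comm]
    ring
  have hA : Integrable (fun ω => ‖Y ω - xstar‖ ^ 2) P :=
    (hY.sub (memLp_const xstar)).integrable_norm_sq
  have hB : Integrable (fun ω => 2 * h * ⟪V ω, Y ω - xstar⟫) P :=
    (integrable_comp_of_fintype (Z := fun ω => (Y ω, X ω))
      (φ := fun a (p : E × E) => ⟪svrgGrad g gbar a p.1 p.2, p.1 - xstar⟫) hI
      fun a => (memLp_svrgGrad havg hL hY hX a).integrable_inner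
        (hY.sub (memLp_const xstar))).const_mul _
  have hC : Integrable (fun ω => h ^ 2 * ‖V ω‖ ^ 2) P :=
    (integrable_comp_of_fintype (Z := fun ω => (Y ω, X ω))
      (φ := fun a (p : E × E) => ‖svrgGrad g gbar a p.1 p.2‖ ^ 2) hI
      fun a => (memLp_svrgGrad havg hL hY hX a).integrable_norm_sq).const_mul _
  have hdescent : μ / 2 * ∫ ω, ‖Y ω - xstar‖ ^ 2 ∂P ≤ ∫ ω, ⟪V ω, Y ω - xstar⟫ ∂P := by
    rw [integral_inner_svrgGrad_eq havg hL hI hunif hIYX hY hX, ← integral_const_mul]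
    exact integral_mono (hA.const_mul _) ((hY.comp_of_norm_sub_le
      (norm_sub_le_of_average havg hL)).integrable_inner (hY.sub (memLp_const xstar)))
      fun ω => hrsi (Y ω)
  have hvariance := integral_norm_svrgGrad_sq_le havg hL hstar hI hunif hIYX hY hX
  have hAB : Integrable (fun ω => ‖Y ω - xstar‖ ^ 2 - 2 * h * ⟪V ω, Y ω - xstar⟫) P := hA.sub hB
  rw [integral_congr_ae (ae_of_all _ hexpand), integral_add hAB hC, integral_sub hA hB,
    integral_const_mul, integral_const_mul]
  nlinarith [mul_le_mul_of_nonneg_left hdescent (by positivity : 0 ≤ 2 * h),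
    mul_le_mul_of_nonneg_left hvariance (sq_nonneg h)]

end OneStep

theorem average_range_le_of_contraction {a : ℕ → ℝ} {c q : ℝ} {m : ℕ} (hc : 0 < c)
    (ham : 0 ≤ a m) (hstep : ∀ k < m, a (k + 1) ≤ (1 - c) * a k + q * a 0) :
    1 / (m : ℝ) * ∑ k ∈ range m, a k ≤ (1 + q * m) / (m * c) * a 0 := by
  have htelescope : c * ∑ k ∈ range m, a k ≤ (1 + q * m) * a 0 :=
    calc c * ∑ k ∈ range m, a k ≤ ∑ k ∈ range m, (a k - a (k + 1) + q * a 0) := by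
          rw [mul_sum]
          exact sum_le_sum fun k hk => by linarith [hstep k (mem_range.1 hk)]
      _ = a 0 - a m + m * (q * a 0) := by
          rw [sum_add_distrib, sum_range_sub', sum_const, card_range, nsmul_eq_mul]
      _ ≤ (1 + q * m) * a 0 := by linarith
  calc 1 / (m : ℝ) * ∑ k ∈ range m, a k = (∑ k ∈ range m, a k) / m := by ring
    _ ≤ (1 + q * m) * a 0 / c / m :=
        div_le_div_of_nonneg_right ((le_div_iff₀ hc).2 (by linarith)) m.cast_nonneg
    _ = (1 + q * m) / (m * c) * a 0 := by ring

section History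

variable {Ω E ι : Type*} [TopologicalSpace E]

abbrev svrgHistory (x : ℕ → Ω → E) (idx : ℕ → ℕ → Ω → ι) (j k : ℕ) : MeasurableSpace Ω :=
  MeasurableSpace.comap (x j) (borel E) ⊔
    ⨆ (p : ℕ × ℕ) (_ : p.1 < j ∨ (p.1 = j ∧ p.2 < k)), MeasurableSpace.comap (idx p.1 p.2) ⊤

variable {x : ℕ → Ω → E} {idx : ℕ → ℕ → Ω → ι} {j : ℕ}

theorem svrgHistory_mono : Monotone (svrgHistory x idx j) := by
  intro k k' hkk
  refine sup_le_sup_left (iSup_le fun p => iSup_le fun hp => ?_) _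
  exact le_iSup₂_of_le (f := fun (p : ℕ × ℕ) (_ : p.1 < j ∨ (p.1 = j ∧ p.2 < k')) =>
    MeasurableSpace.comap (idx p.1 p.2) ⊤) p (hp.imp id fun h => ⟨h.1, h.2.trans_le hkk⟩) le_rfl

theorem measurable_pivot_svrgHistory [MeasurableSpace E] [BorelSpace E] (k : ℕ) :
    Measurable[svrgHistory x idx j k] (x j) := by
  rw [measurable_iff_comap_le, ‹BorelSpace E›.measurable_eq]
  exact le_sup_left

theorem measurable_idx_svrgHistory [MeasurableSpace ι] (k : ℕ) :
    Measurable[svrgHistory x idx j (k + 1)] (idx j k) :=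
  measurable_iff_comap_le.2 <| (MeasurableSpace.comap_mono le_top).trans <| le_sup_of_le_right <|
    le_iSup₂_of_le (f := fun (p : ℕ × ℕ) (_ : p.1 < j ∨ (p.1 = j ∧ p.2 < k + 1)) =>
      MeasurableSpace.comap (idx p.1 p.2) ⊤) (j, k) (Or.inr ⟨rfl, k.lt_succ_self⟩) le_rfl

theorem measurable_iterate_svrgHistory [MeasurableSpace E] [BorelSpace E] [MeasurableSpace ι]
    [Countable ι] [MeasurableSingletonClass ι] {y : ℕ → Ω → E} {m : ℕ} (F : ι → E → E → E)
    (hF : ∀ a, Measurable fun p : E × E => F a p.1 p.2) (hy0 : y 0 = x j)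
    (hy : ∀ k < m, ∀ ω, y (k + 1) ω = F (idx j k ω) (y k ω) (x j ω)) :
    ∀ k ≤ m, Measurable[svrgHistory x idx j k] (y k) := by
  intro k
  induction k with
  | zero => exact fun _ => hy0 ▸ measurable_pivot_svrgHistory 0
  | succ k ih =>
    intro hk
    have hF' : Measurable fun q : (E × E) × ι => F q.2 q.1.1 q.1.2 :=
      measurable_from_prod_countable_left hF
    rw [funext (hy k hk)]
    exact hF'.comp ((((ih (Nat.le_of_succ_le hk)).mono (svrgHistory_mono k.le_succ) le_rfl).prodMk
      (measurable_pivot_svrgHistory _)).prodMk (measurable_idx_svrgHistory k))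

theorem indepFun_of_measurable_svrgHistory [MeasurableSpace E] [BorelSpace E] [MeasurableSpace ι]
    {mΩ : MeasurableSpace Ω} {P : Measure Ω} {k : ℕ} {Y : Ω → E}
    (hindep : Indep (MeasurableSpace.comap (idx j k) ⊤) (svrgHistory x idx j k) P)
    (hY : Measurable[svrgHistory x idx j k] Y) : IndepFun (idx j k) (fun ω => (Y ω, x j ω)) P := by
  rw [IndepFun_iff_Indep]
  exact indep_of_indep_of_le_right
    (indep_of_indep_of_le_left hindep (MeasurableSpace.comap_mono le_top))
    (hY.prodMk (measurable_pivot_svrgHistory k)).comap_le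

end History

theorem svrg_linear_convergence_general
    {Ω : Type*} {m0 : MeasurableSpace Ω} {P : Measure Ω} [IsProbabilityMeasure P]
    {d N : ℕ} (hN : 0 < N)
    (fs : Fin N → EuclideanSpace ℝ (Fin d) → ℝ) (L : ℝ)
    (hfs : ∀ i, ContDiff ℝ 1 (fs i))
    (hLs : ∀ i, ∀ x y : EuclideanSpace ℝ (Fin d),
      ‖gradient (fs i) x - gradient (fs i) y‖ ≤ L * ‖x - y‖)
    (f : EuclideanSpace ℝ (Fin d) → ℝ)
    (hfdef : ∀ z, f z = (1 / (N : ℝ)) * ∑ i, fs i z)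
    (μ : ℝ)
    (xstar : EuclideanSpace ℝ (Fin d))
    (hgradstar : gradient f xstar = 0)
    (hrsi : ∀ z : EuclideanSpace ℝ (Fin d), μ / 2 * ‖z - xstar‖ ^ 2 ≤ ⟪gradient f z, z - xstar⟫)
    (m : ℕ) (h : ℝ) (hh : 0 < h)
    (x : ℕ → Ω → EuclideanSpace ℝ (Fin d))
    (y : ℕ → ℕ → Ω → EuclideanSpace ℝ (Fin d))
    (idx : ℕ → ℕ → Ω → Fin N)
    (x0 : EuclideanSpace ℝ (Fin d)) (hx0 : x 0 = fun _ => x0)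
    (hmeas_idx : ∀ j k, Measurable (idx j k))
    (hL2x : ∀ j, MemLp (x j) 2 P)
    (hL2y : ∀ j k, MemLp (y j k) 2 P)
    (hy0 : ∀ j, y j 0 = x j)
    (hupdate : ∀ j k, k < m → ∀ ω, y j (k + 1) ω =
      y j k ω - h • (gradient (fs (idx j k ω)) (y j k ω)
        - gradient (fs (idx j k ω)) (x j ω) + gradient f (x j ω)))
    (hunif : ∀ j k, ∀ a : Fin N, P {ω | idx j k ω = a} = (N : ℝ≥0∞)⁻¹)
    (hindep : ∀ j k, Indep
      (MeasurableSpace.comap (idx j k) ⊤)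
      (MeasurableSpace.comap (x j) (borel (EuclideanSpace ℝ (Fin d))) ⊔
        ⨆ (p : ℕ × ℕ) (_ : p.1 < j ∨ (p.1 = j ∧ p.2 < k)),
          MeasurableSpace.comap (idx p.1 p.2) ⊤) P)
    (hjump : ∀ j, ∫ ω, ‖x (j + 1) ω - xstar‖ ^ 2 ∂P =
      (1 / (m : ℝ)) * ∑ k ∈ Finset.range m, ∫ ω, ‖y j k ω - xstar‖ ^ 2 ∂P)
    (hstep : 2 * L ^ 2 * h < μ) :
    ∀ j : ℕ, ∫ ω, ‖x j ω - xstar‖ ^ 2 ∂P ≤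
      ((1 + 2 * L ^ 2 * h ^ 2 * m) / (h * m * (μ - 2 * L ^ 2 * h))) ^ j *
        ‖x0 - xstar‖ ^ 2 := by
  have : Nonempty (Fin N) := ⟨⟨0, hN⟩⟩
  have havg : ∀ z, gradient f z = (Fintype.card (Fin N) : ℝ)⁻¹ • ∑ i, gradient (fs i) z := by
    simpa only [Fintype.card_fin, one_div] using
      gradient_eq_smul_sum hfdef fun i => (hfs i).differentiable one_ne_zero
  have hinner : ∀ j, ∀ k < m, ∫ ω, ‖y j (k + 1) ω - xstar‖ ^ 2 ∂P ≤
      (1 - h * (μ - 2 * L ^ 2 * h)) * ∫ ω, ‖y j k ω - xstar‖ ^ 2 ∂P +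
        2 * L ^ 2 * h ^ 2 * ∫ ω, ‖y j 0 ω - xstar‖ ^ 2 ∂P := by
    intro j k hk
    have hyk := measurable_iterate_svrgHistory
      (fun a u w => u - h • svrgGrad (fun i => gradient (fs i)) (gradient f) a u w)
      (fun a => (continuous_fst.sub ((continuous_svrgGrad havg hLs a).const_smul h)).measurable)
      (hy0 j) (hupdate j) k hk.le
    simp_rw [hupdate j k hk, hy0 j]
    exact integral_norm_svrgStep_sub_sq_le (g := fun i => gradient (fs i)) havg hLs hgradstar hrsi
      hh.le (hmeas_idx j k) (by simpa using hunif j k)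
      (indepFun_of_measurable_svrgHistory (hindep j k) hyk) (hL2y j k) (hL2x j)
  set ρ := (1 + 2 * L ^ 2 * h ^ 2 * m) / (h * m * (μ - 2 * L ^ 2 * h))
  have hgap : 0 < μ - 2 * L ^ 2 * h := sub_pos.2 hstep
  intro j
  induction j with
  | zero => simp [hx0]
  | succ j ih =>
    calc ∫ ω, ‖x (j + 1) ω - xstar‖ ^ 2 ∂P ≤ ρ * ∫ ω, ‖x j ω - xstar‖ ^ 2 ∂P := by
          rw [hjump, ← hy0 j]
          refine (average_range_le_of_contraction (by positivity)
            (integral_nonneg fun _ => by positivity) (hinner j)).trans_eq ?_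
          ring
      _ ≤ ρ * (ρ ^ j * ‖x0 - xstar‖ ^ 2) := by gcongr
      _ = ρ ^ (j + 1) * ‖x0 - xstar‖ ^ 2 := by ring

/-- **Linear convergence of SVRG (Option II) under the restricted secant inequality.**
If `2L²h < μ` then for every epoch `j`, the pivots satisfy
`E[‖x_j − x⋆‖²] ≤ ((1 + 2L²h²m)/(h m (μ − 2L²h)))^j ‖x₀ − x⋆‖²`. -/
theorem svrg_linear_convergence
    {Ω : Type*} {m0 : MeasurableSpace Ω} {P : Measure Ω} [IsProbabilityMeasure P]
    {d N : ℕ} (hN : 0 < N)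
    (fs : Fin N → EuclideanSpace ℝ (Fin d) → ℝ) (L : ℝ)
    (hfs : ∀ i, ContDiff ℝ 1 (fs i))
    (hLs : ∀ i, ∀ x y : EuclideanSpace ℝ (Fin d),
      ‖gradient (fs i) x - gradient (fs i) y‖ ≤ L * ‖x - y‖)
    (f : EuclideanSpace ℝ (Fin d) → ℝ)
    (hfdef : ∀ z, f z = (1 / (N : ℝ)) * ∑ i, fs i z)
    (μ : ℝ) (hμ : 0 < μ)
    (xstar : EuclideanSpace ℝ (Fin d)) (hmin : ∀ z, f xstar ≤ f z)
    (hgradstar : gradient f xstar = 0)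
    (hrsi : ∀ z : EuclideanSpace ℝ (Fin d), μ / 2 * ‖z - xstar‖ ^ 2 ≤ ⟪gradient f z, z - xstar⟫)
    (m : ℕ) (hm : 1 ≤ m) (h : ℝ) (hh : 0 < h)
    (x : ℕ → Ω → EuclideanSpace ℝ (Fin d))
    (y : ℕ → ℕ → Ω → EuclideanSpace ℝ (Fin d))
    (idx : ℕ → ℕ → Ω → Fin N)
    (x0 : EuclideanSpace ℝ (Fin d)) (hx0 : x 0 = fun _ => x0)
    (hmeas_x : ∀ j, Measurable (x j))
    (hmeas_y : ∀ j k, Measurable (y j k))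
    (hmeas_idx : ∀ j k, Measurable (idx j k))
    (hL2x : ∀ j, MemLp (x j) 2 P)
    (hL2y : ∀ j k, MemLp (y j k) 2 P)
    (hy0 : ∀ j, y j 0 = x j)
    (hupdate : ∀ j k, k < m → ∀ ω, y j (k + 1) ω =
      y j k ω - h • (gradient (fs (idx j k ω)) (y j k ω)
        - gradient (fs (idx j k ω)) (x j ω) + gradient f (x j ω)))
    (hunif : ∀ j k, ∀ a : Fin N, P {ω | idx j k ω = a} = (N : ℝ≥0∞)⁻¹)
    (hindep : ∀ j k, Indep
      (MeasurableSpace.comap (idx j k) ⊤)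
      (MeasurableSpace.comap (x j) (borel (EuclideanSpace ℝ (Fin d))) ⊔
        ⨆ (p : ℕ × ℕ) (_ : p.1 < j ∨ (p.1 = j ∧ p.2 < k)),
          MeasurableSpace.comap (idx p.1 p.2) ⊤) P)
    (hjump : ∀ j, ∫ ω, ‖x (j + 1) ω - xstar‖ ^ 2 ∂P =
      (1 / (m : ℝ)) * ∑ k ∈ Finset.range m, ∫ ω, ‖y j k ω - xstar‖ ^ 2 ∂P)
    (hstep : 2 * L ^ 2 * h < μ) :
    ∀ j : ℕ, ∫ ω, ‖x j ω - xstar‖ ^ 2 ∂P ≤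
      ((1 + 2 * L ^ 2 * h ^ 2 * m) / (h * m * (μ - 2 * L ^ 2 * h))) ^ j *
        ‖x0 - xstar‖ ^ 2 :=
  svrg_linear_convergence_general (m0 := m0) hN fs L hfs hLs f hfdef μ xstar hgradstar hrsi m h hh x
    y idx x0 hx0 hmeas_idx hL2x hL2y hy0 hupdate hunif hindep hjump hstep
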